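/- Fix k > 0 and noise levels σ₁ ≥ 0, σ₂ ≥ 0. Then the average admitted type β ↦ (1/√(1+σ₁²))·H(k·√(1+σ₁²)·σ_β/β) is strictly decreasing on (0,1), and the average admitted soft skill β ↦ (1/√(1+σ₂²))·H(k·√(1+σ₂²)·σ_β/(1−β)) is strictly increasing on (0,1), where σ_β = √(β² + (1−β)²). That is, under separate thresholds on a type metric and a soft-skill metric with the qualified fraction held fixed, a university that increases the weight β it places on type admits students with lower average type and higher average soft skill. -/
import Mathlib

open MeasureTheory Real Set Filter

/-- Standard normal pdf. -/
noncomputable def phi (x : ℝ) : ℝ := Real.exp (-x ^ 2 / 2) / Real.sqrt (2 * Real.pi)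

/-- Standard normal cdf. -/
noncomputable def Phi (x : ℝ) : ℝ := ∫ y in Set.Iic x, phi y

/-- Standard normal hazard rate. -/
noncomputable def Haz (x : ℝ) : ℝ := phi x / (1 - Phi x)

lemma phi_pos (x : ℝ) : 0 < phi x := by
  unfold phi; positivity

lemma phi_eq (x : ℝ) : phi x = Real.exp (-(1/2) * x ^ 2) * (Real.sqrt (2 * Real.pi))⁻¹ := by
  unfold phi; rw [div_eq_mul_inv]; ring_nf

lemma phi_integrable : Integrable phi := by
  have h : Integrable (fun x : ℝ => Real.exp (-(1/2 : ℝ) * x ^ 2)) :=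
    integrable_exp_neg_mul_sq (by norm_num)
  have := h.mul_const (Real.sqrt (2 * Real.pi))⁻¹
  refine this.congr ?_
  filter_upwards with x using (phi_eq x).symm

lemma integral_phi : ∫ x, phi x = 1 := by
  simp only [phi_eq]
  rw [integral_mul_const, integral_gaussian]
  rw [show Real.pi / (1/2) = 2 * Real.pi by ring]
  rw [mul_inv_cancel₀ (by positivity)]

lemma one_sub_Phi (x : ℝ) : 1 - Phi x = ∫ t in Set.Ioi x, phi t := by
  have h := intervalIntegral.integral_Iic_add_Ioi (μ := volume) (b := x)
    phi_integrable.integrableOn phi_integrable.integrableOn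
  rw [integral_phi] at h
  unfold Phi; linarith

lemma S_pos (x : ℝ) : 0 < ∫ t in Set.Ioi x, phi t := by
  refine setIntegral_pos_iff_support_of_nonneg_ae ?_ phi_integrable.integrableOn |>.2 ?_
  · filter_upwards with t using (phi_pos t).le
  · have : (Function.support phi) ∩ Set.Ioi x = Set.Ioi x := by
      ext t; simp [Function.support, (phi_pos t).ne']
    rw [this]; simp

lemma S_shift (x : ℝ) : ∫ t in Set.Ioi x, phi t = ∫ t in Set.Ioi 0, phi (t + x) := by
  have hmp : MeasurePreserving (fun t : ℝ => t + x) volume volume :=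
    measurePreserving_add_right volume x
  have hemb : MeasurableEmbedding (fun t : ℝ => t + x) :=
    (Homeomorph.addRight x).measurableEmbedding
  have := hmp.setIntegral_preimage_emb hemb phi (Set.Ioi x)
  rw [← this]
  congr 1
  ext t; simp [lt_sub_iff_add_lt]

lemma haz_mono : StrictMono Haz := by
  intro a b hab
  unfold Haz
  rw [one_sub_Phi, one_sub_Phi, div_lt_div_iff₀ (S_pos a) (S_pos b)]
  rw [S_shift a, S_shift b, ← integral_const_mul, ← integral_const_mul]
  have key : ∀ t ∈ Set.Ioi (0:ℝ), phi a * phi (t + b) < phi b * phi (t + a) := by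
    intro t ht
    simp only [phi]
    rw [div_mul_div_comm, div_mul_div_comm, ← Real.exp_add, ← Real.exp_add,
      div_lt_div_iff₀ (by positivity) (by positivity)]
    have : -a ^ 2 / 2 + -(t + b) ^ 2 / 2 < -b ^ 2 / 2 + -(t + a) ^ 2 / 2 := by
      have : 0 < t := ht
      nlinarith
    exact mul_lt_mul_of_pos_right (Real.exp_lt_exp.2 this) (by positivity)
  -- strict integral inequality
  have hint1 : IntegrableOn (fun t => phi a * phi (t + b)) (Set.Ioi 0) := by
    exact ((phi_integrable.comp_add_right b).const_mul (phi a)).integrableOn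
  have hint2 : IntegrableOn (fun t => phi b * phi (t + a)) (Set.Ioi 0) := by
    exact ((phi_integrable.comp_add_right a).const_mul (phi b)).integrableOn
  have hle : (∫ t in Set.Ioi (0:ℝ), phi a * phi (t + b)) ≤
      ∫ t in Set.Ioi (0:ℝ), phi b * phi (t + a) :=
    setIntegral_mono_on hint1 hint2 measurableSet_Ioi (fun t ht => (key t ht).le)
  have hpos : 0 < ∫ t in Set.Ioi (0:ℝ), (phi b * phi (t + a) - phi a * phi (t + b)) := by
    refine (setIntegral_pos_iff_support_of_nonneg_ae ?_ (hint2.sub hint1)).2 ?_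
    · rw [Filter.EventuallyLE, ae_restrict_iff' measurableSet_Ioi]
      filter_upwards with t ht using by simpa using (key t ht).le
    · have hss : Set.Ioi (0:ℝ) ⊆ Function.support
          (fun t => phi b * phi (t + a) - phi a * phi (t + b)) ∩ Set.Ioi 0 := by
        intro t ht
        exact ⟨by simpa using (sub_pos.2 (key t ht)).ne', ht⟩
      refine lt_of_lt_of_le ?_ (measure_mono hss)
      simp
  rw [integral_sub hint2 hint1] at hpos
  linarith

lemma ratio1_anti : ∀ a ∈ Set.Ioo (0:ℝ) 1, ∀ b ∈ Set.Ioo (0:ℝ) 1, a < b →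
    Real.sqrt (b ^ 2 + (1 - b) ^ 2) / b < Real.sqrt (a ^ 2 + (1 - a) ^ 2) / a := by
  rintro a ⟨ha0, ha1⟩ b ⟨hb0, hb1⟩ hab
  rw [div_lt_div_iff₀ hb0 ha0]
  have h1 : Real.sqrt (b ^ 2 + (1 - b) ^ 2) * a = Real.sqrt ((b ^ 2 + (1 - b) ^ 2) * a ^ 2) := by
    rw [Real.sqrt_mul (by positivity), Real.sqrt_sq ha0.le]
  have h2 : Real.sqrt (a ^ 2 + (1 - a) ^ 2) * b = Real.sqrt ((a ^ 2 + (1 - a) ^ 2) * b ^ 2) := by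
    rw [Real.sqrt_mul (by positivity), Real.sqrt_sq hb0.le]
  rw [h1, h2]
  apply Real.sqrt_lt_sqrt (by positivity)
  have h : 0 < a + b - 2 * a * b := by nlinarith [mul_pos ha0 (sub_pos.2 hb1), mul_pos hb0 (sub_pos.2 ha1)]
  nlinarith [mul_pos (sub_pos.2 hab) h]

lemma ratio2_mono : ∀ a ∈ Set.Ioo (0:ℝ) 1, ∀ b ∈ Set.Ioo (0:ℝ) 1, a < b →
    Real.sqrt (a ^ 2 + (1 - a) ^ 2) / (1 - a) < Real.sqrt (b ^ 2 + (1 - b) ^ 2) / (1 - b) := by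
  rintro a ⟨ha0, ha1⟩ b ⟨hb0, hb1⟩ hab
  rw [div_lt_div_iff₀ (by linarith) (by linarith)]
  have h1 : Real.sqrt (a ^ 2 + (1 - a) ^ 2) * (1 - b)
      = Real.sqrt ((a ^ 2 + (1 - a) ^ 2) * (1 - b) ^ 2) := by
    rw [Real.sqrt_mul (by positivity), Real.sqrt_sq (by linarith)]
  have h2 : Real.sqrt (b ^ 2 + (1 - b) ^ 2) * (1 - a)
      = Real.sqrt ((b ^ 2 + (1 - b) ^ 2) * (1 - a) ^ 2) := by
    rw [Real.sqrt_mul (by positivity), Real.sqrt_sq (by linarith)]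
  rw [h1, h2]
  apply Real.sqrt_lt_sqrt (by positivity)
  have h : 0 < b * (1 - a) + a * (1 - b) := by nlinarith [mul_pos ha0 (sub_pos.2 hb1), mul_pos hb0 (sub_pos.2 ha1)]
  nlinarith [mul_pos (sub_pos.2 hab) h]

theorem stmt18 (k σ₁ σ₂ : ℝ) (hk : 0 < k) (h1 : 0 ≤ σ₁) (h2 : 0 ≤ σ₂)
    (σβ : ℝ → ℝ) (hσβ : ∀ β, σβ β = Real.sqrt (β ^ 2 + (1 - β) ^ 2)) :
    StrictAntiOn
      (fun β => 1 / Real.sqrt (1 + σ₁ ^ 2) *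
        Haz (k * Real.sqrt (1 + σ₁ ^ 2) * σβ β / β)) (Set.Ioo 0 1) ∧
    StrictMonoOn
      (fun β => 1 / Real.sqrt (1 + σ₂ ^ 2) *
        Haz (k * Real.sqrt (1 + σ₂ ^ 2) * σβ β / (1 - β))) (Set.Ioo 0 1) := by
  have hs1 : 0 < Real.sqrt (1 + σ₁ ^ 2) := Real.sqrt_pos.2 (by positivity)
  have hs2 : 0 < Real.sqrt (1 + σ₂ ^ 2) := Real.sqrt_pos.2 (by positivity)
  have hK1 : 0 < k * Real.sqrt (1 + σ₁ ^ 2) := by positivity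
  have hK2 : 0 < k * Real.sqrt (1 + σ₂ ^ 2) := by positivity
  constructor
  · intro a ha b hb hab
    simp only
    have hr := ratio1_anti a ha b hb hab
    rw [← hσβ a, ← hσβ b] at hr
    have : k * Real.sqrt (1 + σ₁ ^ 2) * σβ b / b < k * Real.sqrt (1 + σ₁ ^ 2) * σβ a / a := by
      rw [mul_div_assoc, mul_div_assoc]
      exact mul_lt_mul_of_pos_left hr hK1
    exact mul_lt_mul_of_pos_left (haz_mono this) (by positivity)
  · intro a ha b hb hab
    simp only
    have hr := ratio2_mono a ha b hb hab
    rw [← hσβ a, ← hσβ b] at hr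
    have : k * Real.sqrt (1 + σ₂ ^ 2) * σβ a / (1 - a)
        < k * Real.sqrt (1 + σ₂ ^ 2) * σβ b / (1 - b) := by
      rw [mul_div_assoc, mul_div_assoc]
      exact mul_lt_mul_of_pos_left hr hK2
    exact mul_lt_mul_of_pos_left (haz_mono this) (by positivity)
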